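/- Let L be the language with one binary relation symbol E and two unary relation symbols R and G, and let A be the L-structure with domain {1,2,3}, E = {(1,1),(2,3),(3,2)}, R = {1,2}, G = {1,3}. Then there is no nonempty L-structure with at most two elements that satisfies exactly the same positive Horn sentences as A. -/

import Mathlib

open FirstOrder Language

/-- Positive Horn bounded formulas over a relational language: built from atomic
formulas `R(v₁,…,vₙ)` (relation symbols applied to variables, no equality) using
only conjunction, existential quantification, and universal quantification. -/
inductive IsPH (L : FirstOrder.Language) : ∀ {n : ℕ}, L.BoundedFormula Empty n → Prop
  | rel {n l : ℕ} (R : L.Relations l) (v : Fin l → Fin n) :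
      IsPH L (BoundedFormula.rel R fun i => Term.var (Sum.inr (v i)))
  | inf {n : ℕ} {φ ψ : L.BoundedFormula Empty n} :
      IsPH L φ → IsPH L ψ → IsPH L (φ ⊓ ψ)
  | ex {n : ℕ} {φ : L.BoundedFormula Empty (n + 1)} : IsPH L φ → IsPH L φ.ex
  | all {n : ℕ} {φ : L.BoundedFormula Empty (n + 1)} : IsPH L φ → IsPH L φ.all

/-- `φ` is true in the `L`-structure on `M` given by `S`. -/
def RealizeIn (L : FirstOrder.Language) (M : Type*) (S : L.Structure M)
    (φ : L.Sentence) : Prop :=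
  @FirstOrder.Language.Sentence.Realize L M S φ

/-- Relation symbols: one binary `E` and two unary `R`, `G`. -/
inductive SymERG : ℕ → Type
  | E : SymERG 2
  | R : SymERG 1
  | G : SymERG 1

/-- The relational language with one binary relation symbol `E` and two unary
relation symbols `R` and `G`. -/
def Lerg : FirstOrder.Language := ⟨fun _ => Empty, SymERG⟩

/-- The structure `A` on domain `{1,2,3}` (encoded as `Fin 3`, with `0,1,2` standing
for `1,2,3`): `E = {(1,1),(2,3),(3,2)}`, `R = {1,2}`, `G = {1,3}`. -/
def strA : Lerg.Structure (Fin 3) where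
  funMap := fun f _ => Empty.elim f
  RelMap := fun S x =>
    match S, x with
    | SymERG.E, x => (x 0 = 0 ∧ x 1 = 0) ∨ (x 0 = 1 ∧ x 1 = 2) ∨ (x 0 = 2 ∧ x 1 = 1)
    | SymERG.R, x => x 0 = 0 ∨ x 0 = 1
    | SymERG.G, x => x 0 = 0 ∨ x 0 = 2

/-!
`A` satisfies the positive Horn sentences `∃ a, E a a ∧ R a` and `∀ a, ∃ b, E a b`, but neither
`∀ a, E a a` nor `∀ a, ∃ b, E a b ∧ R b`. In a structure with at most two elements the first two
force one of the last two: a red loop `c` and a point `u` without red `E`-successor are distinct,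
hence exhaust the structure, so the `E`-successor of `u` is `u` itself and every point has a loop.
-/

namespace FirstOrder.Language.IsPH

variable {L : Language} {n : ℕ}

theorem rel₁ (r : L.Relations 1) (i : Fin n) : IsPH L (r.boundedFormula₁ &i) := by
  convert IsPH.rel r ![i] using 1
  rw [Relations.boundedFormula₁]
  congr; funext k; fin_cases k; rfl

theorem rel₂ (r : L.Relations 2) (i j : Fin n) : IsPH L (r.boundedFormula₂ &i &j) := by
  convert IsPH.rel r ![i, j] using 1
  rw [Relations.boundedFormula₂]
  congr; funext k; fin_cases k <;> rfl

end FirstOrder.Language.IsPH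

section TwoElements

variable {M : Type*} {x y : M}

theorem eq_or_eq_of_ne_of_forall_eq_or_eq (hM : ∀ z, z = x ∨ z = y) {u c : M} (huc : u ≠ c)
    (z : M) : z = u ∨ z = c := by
  rcases hM u with rfl | rfl <;> rcases hM c with rfl | rfl <;> rcases hM z with rfl | rfl <;>
    simp_all

theorem forall_loop_or_forall_exists_red_edge (hM : ∀ z, z = x ∨ z = y) {E : M → M → Prop}
    {R : M → Prop} (hloop : ∃ c, E c c ∧ R c) (hsucc : ∀ a, ∃ b, E a b) :
    (∀ a, E a a) ∨ ∀ a, ∃ b, E a b ∧ R b := by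
  by_contra! ⟨⟨w, hw⟩, ⟨u, hu⟩⟩
  obtain ⟨c, hcc, hRc⟩ := hloop
  have huc : u ≠ c := by rintro rfl; exact hu _ hcc hRc
  have hcover := eq_or_eq_of_ne_of_forall_eq_or_eq hM huc
  obtain ⟨v, huv⟩ := hsucc u
  obtain rfl : v = u := (hcover v).resolve_right (by rintro rfl; exact hu _ huv hRc)
  rcases hcover w with rfl | rfl
  · exact hw huv
  · exact hw hcc

end TwoElements

namespace Lerg

open Structure

abbrev E : Lerg.Relations 2 := SymERG.E

abbrev R : Lerg.Relations 1 := SymERG.R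

def existsRedLoop : Lerg.Sentence := (E.boundedFormula₂ &0 &0 ⊓ R.boundedFormula₁ &0).ex

def forallLoop : Lerg.Sentence := (E.boundedFormula₂ &0 &0).all

def forallExistsEdge : Lerg.Sentence := (E.boundedFormula₂ &0 &1).ex.all

def forallExistsRedEdge : Lerg.Sentence := (E.boundedFormula₂ &0 &1 ⊓ R.boundedFormula₁ &1).ex.all

theorem isPH_existsRedLoop : IsPH Lerg existsRedLoop := .ex (.inf (.rel₂ _ _ _) (.rel₁ _ _))

theorem isPH_forallLoop : IsPH Lerg forallLoop := .all (.rel₂ _ _ _)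

theorem isPH_forallExistsEdge : IsPH Lerg forallExistsEdge := .all (.ex (.rel₂ _ _ _))

theorem isPH_forallExistsRedEdge : IsPH Lerg forallExistsRedEdge :=
  .all (.ex (.inf (.rel₂ _ _ _) (.rel₁ _ _)))

section Realize

variable {M : Type*} {S : Lerg.Structure M}

theorem realizeIn_existsRedLoop :
    RealizeIn Lerg M S existsRedLoop ↔ ∃ a : M, RelMap E ![a, a] ∧ RelMap R ![a] := by
  simp [RealizeIn, existsRedLoop, Sentence.Realize, Formula.Realize, Fin.snoc]

theorem realizeIn_forallLoop : RealizeIn Lerg M S forallLoop ↔ ∀ a : M, RelMap E ![a, a] := by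
  simp [RealizeIn, forallLoop, Sentence.Realize, Formula.Realize, Fin.snoc]

theorem realizeIn_forallExistsEdge :
    RealizeIn Lerg M S forallExistsEdge ↔ ∀ a : M, ∃ b, RelMap E ![a, b] := by
  simp [RealizeIn, forallExistsEdge, Sentence.Realize, Formula.Realize, Fin.snoc]

theorem realizeIn_forallExistsRedEdge : RealizeIn Lerg M S forallExistsRedEdge ↔
    ∀ a : M, ∃ b, RelMap E ![a, b] ∧ RelMap R ![b] := by
  simp [RealizeIn, forallExistsRedEdge, Sentence.Realize, Formula.Realize, Fin.snoc]

end Realize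

theorem strA_relMap_E (v : Fin 2 → Fin 3) : @RelMap Lerg (Fin 3) strA 2 E v ↔
    (v 0 = 0 ∧ v 1 = 0) ∨ (v 0 = 1 ∧ v 1 = 2) ∨ (v 0 = 2 ∧ v 1 = 1) := Iff.rfl

theorem strA_relMap_R (v : Fin 1 → Fin 3) : @RelMap Lerg (Fin 3) strA 1 R v ↔ v 0 = 0 ∨ v 0 = 1 :=
  Iff.rfl

theorem realizeIn_strA_existsRedLoop : RealizeIn Lerg (Fin 3) strA existsRedLoop := by
  simp only [realizeIn_existsRedLoop, strA_relMap_E, strA_relMap_R]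
  decide

theorem not_realizeIn_strA_forallLoop : ¬ RealizeIn Lerg (Fin 3) strA forallLoop := by
  simp only [realizeIn_forallLoop, strA_relMap_E]
  decide

theorem realizeIn_strA_forallExistsEdge : RealizeIn Lerg (Fin 3) strA forallExistsEdge := by
  simp only [realizeIn_forallExistsEdge, strA_relMap_E]
  decide

theorem not_realizeIn_strA_forallExistsRedEdge :
    ¬ RealizeIn Lerg (Fin 3) strA forallExistsRedEdge := by
  simp only [realizeIn_forallExistsRedEdge, strA_relMap_E, strA_relMap_R]
  decide

theorem realizeIn_forallLoop_or_forallExistsRedEdge {M : Type*} {S : Lerg.Structure M} {x y : M}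
    (hM : ∀ z, z = x ∨ z = y) (hloop : RealizeIn Lerg M S existsRedLoop)
    (hsucc : RealizeIn Lerg M S forallExistsEdge) :
    RealizeIn Lerg M S forallLoop ∨ RealizeIn Lerg M S forallExistsRedEdge := by
  rw [realizeIn_forallLoop, realizeIn_forallExistsRedEdge]
  exact forall_loop_or_forall_exists_red_edge hM (realizeIn_existsRedLoop.1 hloop)
    (realizeIn_forallExistsEdge.1 hsucc)

end Lerg

/-- No nonempty structure with at most two elements satisfies exactly the same
positive Horn sentences as `A`. -/
theorem stmt13 :
    ¬ ∃ (C : Type) (SC : Lerg.Structure C) (x y : C),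
      (∀ z : C, z = x ∨ z = y) ∧
      ∀ φ : Lerg.Sentence, IsPH Lerg φ →
        (RealizeIn Lerg (Fin 3) strA φ ↔ RealizeIn Lerg C SC φ) := by
  rintro ⟨C, SC, x, y, hC, hPH⟩
  rcases Lerg.realizeIn_forallLoop_or_forallExistsRedEdge hC
      ((hPH _ Lerg.isPH_existsRedLoop).1 Lerg.realizeIn_strA_existsRedLoop)
      ((hPH _ Lerg.isPH_forallExistsEdge).1 Lerg.realizeIn_strA_forallExistsEdge) with h | h
  · exact Lerg.not_realizeIn_strA_forallLoop ((hPH _ Lerg.isPH_forallLoop).2 h)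
  · exact Lerg.not_realizeIn_strA_forallExistsRedEdge ((hPH _ Lerg.isPH_forallExistsRedEdge).2 h)
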